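/- arXiv:1212.1291 — 4 statements merged into one kernel-verified Lean document; each statement's English description precedes it below -/
import Mathlib

section
/- For all natural numbers n ≥ 1, the inclusion map of the ordered configuration space F(ℂP^∞, n) into the n-fold product (ℂP^∞)^n is a homotopy equivalence; that is, there exists a homotopy equivalence between F(ℂP^∞, n) and (ℂP^∞)^n whose forward map is the inclusion. -/
/-- The vector space `V = ℂ^(ℕ)` of finitely supported sequences of complex numbers,
endowed with the final (colimit) topology with respect to the inclusions of the
finite-dimensional subspaces `{v : v i = 0 for all i ≥ k}`, each of which carries the
topology induced from the product topology on `ℕ → ℂ`. -/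
noncomputable instance : TopologicalSpace (ℕ →₀ ℂ) :=
  ⨆ k : ℕ,
    TopologicalSpace.coinduced
      (Subtype.val : {v : ℕ →₀ ℂ // ∀ i, k ≤ i → v i = 0} → (ℕ →₀ ℂ))
      (TopologicalSpace.induced
        (fun v : {v : ℕ →₀ ℂ // ∀ i, k ≤ i → v i = 0} => fun i => (v : ℕ →₀ ℂ) i)
        Pi.topologicalSpace)

/-- `ℂP^∞`, the projectivization of `V = ℂ^(ℕ)` (nonzero vectors modulo nonzero
scalar multiplication), with the quotient topology. -/
abbrev CPinf : Type := Projectivization ℂ (ℕ →₀ ℂ)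

/-- The quotient topology on `ℂP^∞`. -/
noncomputable instance : TopologicalSpace CPinf :=
  inferInstanceAs (TopologicalSpace (Quotient (projectivizationSetoid ℂ (ℕ →₀ ℂ))))

/-!
Coordinatewise straight-line homotopies of injective linear maps of `V = ℂ^(ℕ)` act on
`(ℂP^∞)ⁿ`. First deform the identity to `A : e_k ↦ e_{2k+1}` (injective all along, since `A`
raises the top index of every vector), then deform `A`, in the `i`-th factor, to
`S_i : e_k ↦ e_{2⟨i, k⟩}` with `⟨i, k⟩ = Nat.pair i k`. At a time `t ≠ 0` the `i`-th image has
nonzero coordinates at some `2⟨i, k⟩`, where the images in the other factors vanish, so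
different factors never meet; at time `0` the map is injective on each factor. Hence the whole
deformation preserves `F(ℂP^∞, n)`, and at time `1` it lands in `F(ℂP^∞, n)`, which makes the
inclusion a homotopy equivalence.

Continuity is checked on the finite-dimensional pieces of `V`: crossing with `ℝ` preserves
the quotient map from their disjoint union since `ℝ` is locally compact, and the projection
to `ℂP^∞` is open, so products of copies of it remain quotient maps.
-/

namespace ContinuousMap

variable {X Y : Type*} [TopologicalSpace X] [TopologicalSpace Y]

theorem homotopicWith_curry_zero_one (Φ : C(ℝ × X, Y)) {P : C(X, Y) → Prop}
    (hP : ∀ t, P (Φ.curry t)) : (Φ.curry 0).HomotopicWith (Φ.curry 1) P :=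
  ⟨{ toFun := fun p => Φ (p.1, p.2)
     continuous_toFun := by fun_prop
     map_zero_left := fun _ => rfl
     map_one_left := fun _ => rfl
     prop' := fun t => hP t }⟩

theorem HomotopicWith.exists_homotopyEquiv_subtype {p : X → Prop} {f : C(X, X)}
    (h : (ContinuousMap.id X).HomotopicWith f fun g => ∀ x, p x → p (g x))
    (hf : ∀ x, p (f x)) :
    ∃ e : HomotopyEquiv {x // p x} X, ∀ x, e.toFun x = x.val := by
  obtain ⟨H⟩ := h
  let g : C(X, {x // p x}) := ⟨fun x => ⟨f x, hf x⟩, by fun_prop⟩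
  refine ⟨⟨⟨Subtype.val, continuous_subtype_val⟩, g, ?_, ?_⟩, fun _ => rfl⟩
  · exact ⟨Homotopy.symm
      { toFun := fun q => ⟨H (q.1, q.2), H.prop q.1 q.2 q.2.2⟩
        continuous_toFun := by fun_prop
        map_zero_left := fun x => Subtype.ext (H.apply_zero x)
        map_one_left := fun x => Subtype.ext (H.apply_one x) }⟩
  · exact ⟨H.toHomotopy.symm⟩

end ContinuousMap

namespace CPinf

open Topology

local notation "V" => ℕ →₀ ℂ

/-- The `k`-th piece of `V`; a type synonym, so that it carries the coordinatewise topology used in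
the definition of the topology of `V` rather than the subspace topology. -/
def Piece (k : ℕ) : Type := {v : V // ∀ i, k ≤ i → v i = 0}

def Piece.val {k : ℕ} (v : Piece k) : V := Subtype.val v

noncomputable instance (k : ℕ) : TopologicalSpace (Piece k) :=
  .induced (fun v : Piece k => fun i => v.val i) Pi.topologicalSpace

lemma continuous_piece_val (k : ℕ) : Continuous (Piece.val (k := k)) :=
  continuous_iSup_rng (i := k) continuous_coinduced_rng

lemma continuous_piece_apply (k i : ℕ) : Continuous fun v : Piece k => v.val i :=
  (continuous_apply i).comp continuous_induced_dom

lemma Piece.val_eq_sum {k : ℕ} (v : Piece k) :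
    v.val = ∑ i ∈ Finset.range k, v.val i • Finsupp.single i 1 := by
  have hsupp : v.val.support ⊆ Finset.range k := fun i hi => by
    by_contra h
    exact Finsupp.mem_support_iff.1 hi (v.2 i (by simpa using h))
  conv_lhs => rw [← Finsupp.sum_single v.val]
  rw [Finsupp.sum_of_support_subset _ hsupp _ fun _ _ => Finsupp.single_zero _]
  simp only [Finsupp.smul_single_one]

lemma exists_forall_ge_apply_eq_zero {ι : Type*} (s : Finset ι) (u : ι → V) :
    ∃ m, ∀ i ∈ s, ∀ j, m ≤ j → u i j = 0 := by
  obtain ⟨m, hm⟩ := Finset.exists_nat_subset_range (s.biUnion fun i => (u i).support)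
  refine ⟨m, fun i hi j hj => Finsupp.notMem_support_iff.1 fun h => ?_⟩
  have := hm (Finset.mem_biUnion.2 ⟨i, hi, h⟩)
  simp only [Finset.mem_range] at this
  omega

lemma isQuotientMap_sigma_piece_val : IsQuotientMap fun p : Σ k, Piece k => p.2.val := by
  refine ⟨⟨?_⟩, fun v => ?_⟩
  · rw [instTopologicalSpaceSigma, coinduced_iSup]
    rfl
  · obtain ⟨k, hk⟩ := exists_forall_ge_apply_eq_zero {v} id
    exact ⟨⟨k, ⟨v, hk v (Finset.mem_singleton_self v)⟩⟩, rfl⟩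

lemma continuous_of_continuous_piece {X : Type*} [TopologicalSpace X] {F : ℝ × V → X}
    (hF : ∀ k, Continuous fun p : ℝ × Piece k => F (p.1, p.2.val)) : Continuous F := by
  refine isQuotientMap_sigma_piece_val.continuous_lift_prod_right ?_
  have hσ : Continuous fun q : Σ k, Piece k × ℝ => F (q.2.2, q.2.1.val) :=
    continuous_sigma fun k => (hF k).comp continuous_swap
  exact (hσ.comp (Homeomorph.sigmaProdDistrib (X := Piece) (Y := ℝ)).continuous).comp
    continuous_swap

lemma continuous_finsetSum_smul {X ι : Type*} [TopologicalSpace X] (s : Finset ι)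
    {c : ι → X → ℂ} (hc : ∀ i ∈ s, Continuous (c i)) (u : ι → V) :
    Continuous fun x => ∑ i ∈ s, c i x • u i := by
  obtain ⟨m, hm⟩ := exists_forall_ge_apply_eq_zero s u
  have hmem : ∀ x j, m ≤ j → (∑ i ∈ s, c i x • u i) j = 0 := fun x j hj => by
    simp only [Finsupp.finsetSum_apply, Finsupp.smul_apply]
    exact Finset.sum_eq_zero fun i hi => by rw [hm i hi j hj, smul_zero]
  let φ : X → Piece m := fun x => ⟨_, hmem x⟩
  have hφ : Continuous φ := continuous_induced_rng.2 <| continuous_pi fun j => by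
    show Continuous fun x => (∑ i ∈ s, c i x • u i) j
    simp only [Finsupp.finsetSum_apply, Finsupp.smul_apply, smul_eq_mul]
    exact continuous_finsetSum _ fun i hi => (hc i hi).mul continuous_const
  exact (continuous_piece_val m).comp hφ

noncomputable def linePath (f g : V →ₗ[ℂ] V) (t : ℝ) : V →ₗ[ℂ] V :=
  AffineMap.lineMap (V1 := V →ₗ[ℂ] V) f g (t : ℂ)

lemma linePath_apply (f g : V →ₗ[ℂ] V) (t : ℝ) (v : V) :
    linePath f g t v = (1 - (t : ℂ)) • f v + (t : ℂ) • g v := by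
  simp [linePath, AffineMap.lineMap_apply_module]

@[simp] lemma linePath_zero (f g : V →ₗ[ℂ] V) : linePath f g 0 = f := by
  simp [linePath]

@[simp] lemma linePath_one (f g : V →ₗ[ℂ] V) : linePath f g 1 = g := by
  simp [linePath]

lemma continuous_linePath_apply (f g : V →ₗ[ℂ] V) :
    Continuous fun p : ℝ × V => linePath f g p.1 p.2 := by
  refine continuous_of_continuous_piece fun k => ?_
  let c : ℕ ⊕ ℕ → ℝ × Piece k → ℂ :=
    Sum.elim (fun i p => (1 - p.1 : ℂ) * p.2.val i) (fun i p => (p.1 : ℂ) * p.2.val i)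
  let u : ℕ ⊕ ℕ → V := Sum.elim (fun i => f (Finsupp.single i 1)) (fun i => g (Finsupp.single i 1))
  have hexpand (p : ℝ × Piece k) : linePath f g p.1 p.2.val =
      ∑ i ∈ (Finset.range k).disjSum (Finset.range k), c i p • u i := by
    rw [Finset.sum_disjSum, linePath_apply]
    conv_lhs => rw [p.2.val_eq_sum]
    simp only [map_sum, map_smul, Finset.smul_sum, smul_smul, c, u, Sum.elim_inl, Sum.elim_inr]
  have hcoord (i : ℕ) : Continuous fun p : ℝ × Piece k => p.2.val i :=
    (continuous_piece_apply k i).comp continuous_snd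
  have hc (i : ℕ ⊕ ℕ) : Continuous (c i) := by
    rcases i with i | i
    · exact (continuous_const.sub (Complex.continuous_ofReal.comp continuous_fst)).mul (hcoord i)
    · exact (Complex.continuous_ofReal.comp continuous_fst).mul (hcoord i)
  simp only [hexpand]
  exact continuous_finsetSum_smul _ (fun i _ => hc i) u

lemma continuous_linearMap (f : V →ₗ[ℂ] V) : Continuous f := by
  have := (continuous_linePath_apply f f).comp
    (continuous_const (y := (0 : ℝ)).prodMk continuous_id)
  simpa [Function.comp_def] using this

lemma isOpenQuotientMap_mk' :
    IsOpenQuotientMap (Projectivization.mk' ℂ : {v : V // v ≠ 0} → CPinf) := by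
  have hq : IsQuotientMap (Projectivization.mk' ℂ : {v : V // v ≠ 0} → CPinf) :=
    isQuotientMap_quotient_mk'
  refine ⟨hq.surjective, hq.continuous, fun U hU => ?_⟩
  let smul (c : ℂˣ) (v : {v : V // v ≠ 0}) : {v : V // v ≠ 0} :=
    ⟨(c : ℂ) • v.1, smul_ne_zero c.ne_zero v.2⟩
  have hsmul (c : ℂˣ) : Continuous (smul c) :=
    ((continuous_linearMap ((c : ℂ) • LinearMap.id)).comp continuous_subtype_val).subtype_mk _
  have hsat : Projectivization.mk' ℂ ⁻¹' (Projectivization.mk' ℂ '' U) = ⋃ c, smul c ⁻¹' U := by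
    ext v
    simp only [Set.mem_preimage, Set.mem_image, Set.mem_iUnion, Projectivization.mk'_eq_mk,
      Projectivization.mk_eq_mk_iff]
    constructor
    · rintro ⟨w, hw, c, hc⟩
      exact ⟨c, by rwa [show smul c v = w from Subtype.ext hc]⟩
    · rintro ⟨c, hc⟩
      exact ⟨smul c v, hc, c, rfl⟩
  rw [← hq.isOpen_preimage, hsat]
  exact isOpen_iUnion fun c => (hsmul c).isOpen_preimage U hU

lemma continuous_uncurry_map {ι : Type*} (F : ι → ℝ → V →ₗ[ℂ] V)
    (hF : ∀ i t, Function.Injective (F i t)) (hc : ∀ i, Continuous fun p : ℝ × V => F i p.1 p.2) :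
    Continuous fun p : ℝ × (ι → CPinf) => fun i => (p.2 i).map (F i p.1) (hF i p.1) := by
  have hQ := (IsOpenQuotientMap.id (X := ℝ)).prodMap
    (IsOpenQuotientMap.piMap fun _ : ι => isOpenQuotientMap_mk')
  rw [hQ.isQuotientMap.continuous_iff]
  refine continuous_pi fun i => isOpenQuotientMap_mk'.continuous.comp ?_
  exact ((hc i).comp (continuous_fst.prodMk
    (continuous_subtype_val.comp ((continuous_apply i).comp continuous_snd)))).subtype_mk _

noncomputable def linePathFamily {ι : Type*} (f g : ι → V →ₗ[ℂ] V)
    (h : ∀ i t, Function.Injective (linePath (f i) (g i) t)) : C(ℝ × (ι → CPinf), ι → CPinf) :=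
  ⟨fun p i => (p.2 i).map _ (h i p.1),
    continuous_uncurry_map _ h fun i => continuous_linePath_apply (f i) (g i)⟩

lemma lmapDomain_apply_of_injective {e : ℕ → ℕ} (he : Function.Injective e) (v : V) (a : ℕ) :
    Finsupp.lmapDomain ℂ ℂ e v (e a) = v a :=
  Finsupp.mapDomain_apply he v a

lemma lmapDomain_apply_of_forall_ne {e : ℕ → ℕ} {j : ℕ} (hj : ∀ a, e a ≠ j) (v : V) :
    Finsupp.lmapDomain ℂ ℂ e v j = 0 :=
  Finsupp.mapDomain_of_notMem_range v j fun ⟨a, ha⟩ => hj a ha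

lemma injective_linePath_id_lmapDomain {e : ℕ → ℕ} (he : Function.Injective e)
    (hlt : ∀ m, m < e m) (t : ℝ) :
    Function.Injective (linePath LinearMap.id (Finsupp.lmapDomain ℂ ℂ e) t) := by
  refine (injective_iff_map_eq_zero _).2 fun v hv => ?_
  by_contra hv0
  have hne : v.support.Nonempty := Finsupp.support_nonempty_iff.2 hv0
  set m := v.support.max' hne
  have hm : v m ≠ 0 := Finsupp.mem_support_iff.1 (v.support.max'_mem hne)
  have hem : v (e m) = 0 := Finsupp.notMem_support_iff.1 fun h =>
    (hlt m).not_ge (v.support.le_max' _ h)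
  have h₁ := DFunLike.congr_fun hv (e m)
  have h₂ := DFunLike.congr_fun hv m
  simp only [linePath_apply, Finsupp.add_apply, Finsupp.smul_apply, smul_eq_mul,
    LinearMap.id_apply, lmapDomain_apply_of_injective he, hem, Finsupp.coe_zero,
    Pi.zero_apply] at h₁ h₂
  have ht : (t : ℂ) = 0 := by simpa [hm] using h₁
  exact hm (by simpa [ht] using h₂)

lemma injective_linePath_lmapDomain {e₁ e₂ : ℕ → ℕ} (h₁ : Function.Injective e₁)
    (h₂ : Function.Injective e₂) (h₁₂ : ∀ a b, e₁ a ≠ e₂ b) (t : ℝ) :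
    Function.Injective
      (linePath (Finsupp.lmapDomain ℂ ℂ e₁) (Finsupp.lmapDomain ℂ ℂ e₂) t) := by
  refine (injective_iff_map_eq_zero _).2 fun v hv => Finsupp.ext fun a => ?_
  have hv₁ := DFunLike.congr_fun hv (e₁ a)
  have hv₂ := DFunLike.congr_fun hv (e₂ a)
  simp only [linePath_apply, Finsupp.add_apply, Finsupp.smul_apply, smul_eq_mul,
    lmapDomain_apply_of_injective h₁, lmapDomain_apply_of_injective h₂,
    lmapDomain_apply_of_forall_ne (h₁₂ · a),
    lmapDomain_apply_of_forall_ne fun b => (h₁₂ a b).symm,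
    Finsupp.coe_zero, Pi.zero_apply] at hv₁ hv₂
  rw [Finsupp.coe_zero, Pi.zero_apply]
  linear_combination hv₁ + hv₂

lemma eq_of_map_linePath_eq_map_linePath {e e₁ e₂ : ℕ → ℕ} (he : Function.Injective e)
    (he₁ : Function.Injective e₁) (h₀₁ : ∀ a b, e a ≠ e₁ b) (h₂₁ : ∀ a b, e₂ a ≠ e₁ b) {t : ℝ}
    (hL₁ : Function.Injective
      (linePath (Finsupp.lmapDomain ℂ ℂ e) (Finsupp.lmapDomain ℂ ℂ e₁) t))
    (hL₂ : Function.Injective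
      (linePath (Finsupp.lmapDomain ℂ ℂ e) (Finsupp.lmapDomain ℂ ℂ e₂) t))
    {x y : CPinf} (h : x.map _ hL₁ = y.map _ hL₂) : t = 0 ∧ x = y := by
  induction x using Projectivization.ind with | h v hv =>
  induction y using Projectivization.ind with | h w hw =>
  rw [Projectivization.map_mk, Projectivization.map_mk, Projectivization.mk_eq_mk_iff'] at h
  obtain ⟨a, ha⟩ := h
  have hcoord (k : ℕ) : (t : ℂ) * v k = 0 := by
    have := DFunLike.congr_fun ha (e₁ k)
    simp only [linePath_apply, Finsupp.add_apply, Finsupp.smul_apply, smul_eq_mul,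
      lmapDomain_apply_of_injective he₁, lmapDomain_apply_of_forall_ne (h₀₁ · k),
      lmapDomain_apply_of_forall_ne (h₂₁ · k)] at this
    simpa using this.symm
  obtain rfl : t = 0 := by
    by_contra ht
    exact hv (Finsupp.ext fun k => by simpa [ht] using hcoord k)
  simp only [linePath_zero, ← map_smul] at ha
  exact ⟨rfl, (Projectivization.mk_eq_mk_iff' ℂ _ _ _ _).2 ⟨a, Finsupp.mapDomain_injective he ha⟩⟩

def oddIndex (k : ℕ) : ℕ := 2 * k + 1

def slotIndex (i k : ℕ) : ℕ := 2 * Nat.pair i k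

lemma oddIndex_injective : Function.Injective oddIndex := fun a b h => by
  simp only [oddIndex] at h
  omega

lemma lt_oddIndex (k : ℕ) : k < oddIndex k := by
  simp only [oddIndex]
  omega

lemma slotIndex_injective (i : ℕ) : Function.Injective (slotIndex i) := fun a b h => by
  simpa [slotIndex] using h

lemma oddIndex_ne_slotIndex (i a b : ℕ) : oddIndex a ≠ slotIndex i b := by
  simp only [oddIndex, slotIndex]
  omega

lemma slotIndex_ne_slotIndex {i j : ℕ} (hij : i ≠ j) (a b : ℕ) :
    slotIndex j a ≠ slotIndex i b := by
  simp [slotIndex, hij.symm]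

section Families

variable (n : ℕ)

noncomputable def oddFamily : C(ℝ × (Fin n → CPinf), Fin n → CPinf) :=
  linePathFamily (fun _ => LinearMap.id) (fun _ => Finsupp.lmapDomain ℂ ℂ oddIndex)
    fun _ => injective_linePath_id_lmapDomain oddIndex_injective lt_oddIndex

noncomputable def slotFamily : C(ℝ × (Fin n → CPinf), Fin n → CPinf) :=
  linePathFamily (fun _ => Finsupp.lmapDomain ℂ ℂ oddIndex)
    (fun i => Finsupp.lmapDomain ℂ ℂ (slotIndex i))
    fun i => injective_linePath_lmapDomain oddIndex_injective (slotIndex_injective i)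
      (oddIndex_ne_slotIndex i)

lemma oddFamily_curry_zero : (oddFamily n).curry 0 = ContinuousMap.id _ := by
  ext x i
  simp [oddFamily, linePathFamily]

lemma oddFamily_curry_one : (oddFamily n).curry 1 = (slotFamily n).curry 0 := by
  ext x i
  simp [oddFamily, slotFamily, linePathFamily]

lemma injective_oddFamily (t : ℝ) {x : Fin n → CPinf} (hx : Function.Injective x) :
    Function.Injective (oddFamily n (t, x)) :=
  (Projectivization.map_injective _
    (injective_linePath_id_lmapDomain oddIndex_injective lt_oddIndex t)).comp hx

lemma eq_of_slotFamily_apply_eq {t : ℝ} {x : Fin n → CPinf} {i j : Fin n} (hij : i ≠ j)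
    (h : slotFamily n (t, x) i = slotFamily n (t, x) j) : t = 0 ∧ x i = x j :=
  eq_of_map_linePath_eq_map_linePath oddIndex_injective (slotIndex_injective i)
    (oddIndex_ne_slotIndex i) (slotIndex_ne_slotIndex (Fin.val_injective.ne hij))
    (injective_linePath_lmapDomain oddIndex_injective (slotIndex_injective i)
      (oddIndex_ne_slotIndex i) t)
    (injective_linePath_lmapDomain oddIndex_injective (slotIndex_injective j)
      (oddIndex_ne_slotIndex j) t) h

lemma injective_slotFamily (t : ℝ) {x : Fin n → CPinf} (hx : Function.Injective x) :
    Function.Injective (slotFamily n (t, x)) := fun i j h => by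
  by_contra hij
  exact hij (hx (eq_of_slotFamily_apply_eq n hij h).2)

lemma injective_slotFamily_one (x : Fin n → CPinf) :
    Function.Injective (slotFamily n (1, x)) := fun i j h => by
  by_contra hij
  exact one_ne_zero (eq_of_slotFamily_apply_eq n hij h).1

end Families

end CPinf

open CPinf ContinuousMap

theorem inclusion_config_homotopyEquiv_general (n : ℕ) :
    ∃ h : ContinuousMap.HomotopyEquiv
        {f : Fin n → CPinf // Function.Injective f} (Fin n → CPinf),
      ∀ f : {f : Fin n → CPinf // Function.Injective f}, h.toFun f = f.val := by
  have h₁ := homotopicWith_curry_zero_one (oddFamily n)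
    (P := fun g => ∀ x, Function.Injective x → Function.Injective (g x))
    fun t _ => injective_oddFamily n t
  have h₂ := homotopicWith_curry_zero_one (slotFamily n)
    (P := fun g => ∀ x, Function.Injective x → Function.Injective (g x))
    fun t _ => injective_slotFamily n t
  rw [oddFamily_curry_zero, oddFamily_curry_one] at h₁
  exact (h₁.trans h₂).exists_homotopyEquiv_subtype (injective_slotFamily_one n)

/-- For `n ≥ 1`, the inclusion of the ordered configuration space
`F(ℂP^∞, n)` (the subspace of `(ℂP^∞)ⁿ` of tuples with pairwise distinct coordinates)
into `(ℂP^∞)ⁿ` is a homotopy equivalence. -/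
theorem inclusion_config_homotopyEquiv (n : ℕ) (hn : 1 ≤ n) :
    ∃ h : ContinuousMap.HomotopyEquiv
        {f : Fin n → CPinf // Function.Injective f} (Fin n → CPinf),
      ∀ f : {f : Fin n → CPinf // Function.Injective f}, h.toFun f = f.val :=
  inclusion_config_homotopyEquiv_general n
end

section
/- The inclusion of the space F_nc(ℂP^∞, 3) of ordered triples of non-collinear points of ℂP^∞ into the product (ℂP^∞)^3 is a homotopy equivalence; in particular F_nc(ℂP^∞,3) is homotopy equivalent to (ℂP^∞)^3. -/
/-!
Let `Sⱼ` (`j < k`) be the linear map of `ℕ →₀ ℂ` sending `eₙ` to `e_{kn+j}`. The images of the `Sⱼ`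
are independent, so `(xⱼ) ↦ (Sⱼ xⱼ)` maps `(ℂP^∞)^k` into the independent `k`-tuples. The straight
line `t • v + (1 - t) • Sⱼ v` never vanishes on `v ≠ 0` and keeps independent tuples independent:
`Sⱼ` multiplies the top nonzero index by `k`, so no nontrivial relation survives. Hence moving each
point along its line deforms `(ℂP^∞)^k` into the independent tuples while keeping them
independent. Continuity is checked on the finite-dimensional pieces, which suffices since the
colimit topology commutes with products with the (locally compact) interval.
-/

namespace ContinuousMap.HomotopyEquiv

open unitInterval

def ofDeformationInto {X : Type*} [TopologicalSpace X] {A : Set X} (H : C(I × X, X))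
    (h0 : ∀ x, H (0, x) ∈ A) (h1 : ∀ x, H (1, x) = x) (hA : ∀ t, ∀ x ∈ A, H (t, x) ∈ A) :
    HomotopyEquiv A X where
  toFun := ⟨Subtype.val, continuous_subtype_val⟩
  invFun := ⟨fun x => ⟨H (0, x), h0 x⟩, by fun_prop⟩
  left_inv := ⟨{
    toFun := fun p => ⟨H (p.1, p.2), hA p.1 p.2 p.2.2⟩
    continuous_toFun := by fun_prop
    map_zero_left := fun _ => rfl
    map_one_left := fun x => Subtype.ext (h1 x) }⟩
  right_inv := ⟨{
    toContinuousMap := H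
    map_zero_left := fun _ => rfl
    map_one_left := h1 }⟩

end ContinuousMap.HomotopyEquiv

noncomputable section

namespace Finsupp

open unitInterval

section LinearAlgebra

variable {𝕜 : Type*} [Field 𝕜] {k : ℕ}

def interleave (k : ℕ) (j : Fin k) : (ℕ →₀ 𝕜) →ₗ[𝕜] (ℕ →₀ 𝕜) :=
  lmapDomain 𝕜 𝕜 fun n => k * n + j

theorem interleave_apply (j : Fin k) (v : ℕ →₀ 𝕜) (i : ℕ) :
    interleave k j v i = if i % k = j then v (i / k) else 0 := by
  have hk : 0 < k := j.pos
  split_ifs with h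
  · have hinj : Function.Injective fun n => k * n + (j : ℕ) := fun m n hmn =>
      Nat.eq_of_mul_eq_mul_left hk (by simpa using hmn)
    have hi : k * (i / k) + j = i := by rw [← h]; exact Nat.div_add_mod i k
    rw [← hi, interleave, lmapDomain_apply, mapDomain_apply hinj, hi]
  · refine mapDomain_of_notMem_range _ _ ?_
    rintro ⟨n, rfl⟩
    exact h (by simp [Nat.mod_eq_of_lt j.isLt])

theorem interleave_apply_mul_add (j j' : Fin k) (v : ℕ →₀ 𝕜) (n : ℕ) :
    interleave k j' v (k * n + j) = if j = j' then v n else 0 := by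
  have hk : 0 < k := j.pos
  simp [interleave_apply, Nat.mod_eq_of_lt j.isLt, Fin.val_inj, Nat.mul_add_div hk,
    Nat.div_eq_of_lt j.isLt]

theorem sum_interleave_apply_mul_add (u : Fin k → ℕ →₀ 𝕜) (j : Fin k) (n : ℕ) :
    (∑ j', interleave k j' (u j')) (k * n + j) = u j n := by
  simp [Finset.sum_apply', interleave_apply_mul_add]

/-- Interleaving multiplies the top nonzero index `N` by `k` while `∑ j, u j` keeps it, so a
relation forces `N = 0`, and at index `0` it reads `(a + b) • u 0 0 = 0`. -/
theorem eq_zero_of_smul_sum_add_smul_sum_interleave (hk : 2 ≤ k) {a b : 𝕜} (hab : a + b = 1)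
    (hb : b ≠ 0) {u : Fin k → ℕ →₀ 𝕜}
    (h : a • ∑ j, u j + b • ∑ j, interleave k j (u j) = 0) : u = 0 := by
  have eval (j : Fin k) (n : ℕ) : a * ∑ j', u j' (k * n + j) + b * u j n = 0 := by
    have := DFunLike.congr_fun h (k * n + j)
    rwa [add_apply, smul_apply, smul_apply, sum_interleave_apply_mul_add, Finset.sum_apply']
      at this
  by_contra hu
  obtain ⟨⟨j₀, N⟩, hN, hmax⟩ := (Finset.univ.sigma fun j => (u j).support).exists_max_image
    Sigma.snd (by simpa [Function.ne_iff, Finsupp.ext_iff] using hu)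
  simp only [Finset.mem_sigma, Finset.mem_univ, mem_support_iff, true_and] at hN hmax
  have le_of_ne_zero (j : Fin k) (n : ℕ) (hjn : u j n ≠ 0) : k * n + j ≤ N := by
    by_contra! hlt
    have hzero : ∑ j', u j' (k * n + j) = 0 :=
      Finset.sum_eq_zero fun j' _ => by_contra fun h => (hmax ⟨j', _⟩ h).not_gt hlt
    simpa [hzero, hb, hjn] using eval j n
  have hN0 : N = 0 ∧ (j₀ : ℕ) = 0 := by
    have := le_of_ne_zero j₀ N hN
    have : 2 * N ≤ k * N := Nat.mul_le_mul_right N hk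
    omega
  obtain ⟨rfl, hj₀⟩ := hN0
  have hsum : ∑ j', u j' (k * 0 + j₀) = u j₀ 0 := by
    rw [hj₀, mul_zero]
    refine Finset.sum_eq_single j₀ (fun j' _ hj' => by_contra fun h => hj' (Fin.ext ?_)) (by simp)
    have := le_of_ne_zero j' 0 h
    omega
  have := eval j₀ 0
  rw [hsum, ← add_mul, hab, one_mul] at this
  exact hN this

theorem linearIndependent_smul_add_smul_interleave (hk : 2 ≤ k) {a b : 𝕜} (hab : a + b = 1)
    (hb : b ≠ 0) {v : Fin k → ℕ →₀ 𝕜} (hv : ∀ j, v j ≠ 0) :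
    LinearIndependent 𝕜 fun j => a • v j + b • interleave k j (v j) := by
  refine Fintype.linearIndependent_iff.2 fun c hc j => ?_
  have hu := eq_zero_of_smul_sum_add_smul_sum_interleave hk hab hb (u := fun j => c j • v j) (by
    simpa [Finset.smul_sum, smul_add, Finset.sum_add_distrib, smul_comm (c _)] using hc)
  simpa [hv j] using congrFun hu j

theorem linearIndependent_interleave (hk : 2 ≤ k) {v : Fin k → ℕ →₀ 𝕜} (hv : ∀ j, v j ≠ 0) :
    LinearIndependent 𝕜 fun j => interleave k j (v j) := by
  simpa using linearIndependent_smul_add_smul_interleave hk (zero_add 1) one_ne_zero hv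

end LinearAlgebra

/-- A `def` rather than a subtype, so that it carries the coordinatewise topology used in the
colimit topology on `ℕ →₀ ℂ`, not the subspace topology. -/
def SupportedBelow (n : ℕ) : Type := {v : ℕ →₀ ℂ // ∀ i, n ≤ i → v i = 0}

instance (n : ℕ) : TopologicalSpace (SupportedBelow n) :=
  TopologicalSpace.induced (fun v i => v.1 i) Pi.topologicalSpace

namespace SupportedBelow

theorem continuous_val (n : ℕ) : Continuous fun v : SupportedBelow n => v.1 :=
  continuous_iSup_rng (i := n) continuous_coinduced_rng

theorem continuous_apply (n i : ℕ) : Continuous fun v : SupportedBelow n => v.1 i :=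
  (_root_.continuous_apply i).comp continuous_induced_dom

end SupportedBelow

theorem continuous_of_forall_supportedBelow {X : Type*} [TopologicalSpace X] {f : (ℕ →₀ ℂ) → X}
    (h : ∀ n, Continuous fun v : SupportedBelow n => f v.1) : Continuous f :=
  continuous_iSup_dom.2 fun n => continuous_coinduced_dom.2 (h n)

/-- Currying: products with a locally compact space commute with the colimit topology. -/
theorem continuous_prod_of_forall_supportedBelow {Y Z : Type*} [TopologicalSpace Y]
    [TopologicalSpace Z] [LocallyCompactSpace Y] {f : (ℕ →₀ ℂ) × Y → Z}
    (h : ∀ n, Continuous fun p : SupportedBelow n × Y => f (p.1.1, p.2)) : Continuous f := by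
  have hslice (v : ℕ →₀ ℂ) : Continuous fun y => f (v, y) := by
    obtain ⟨n, hn⟩ := v.support.exists_nat_subset_range
    have hv : ∀ i, n ≤ i → v i = 0 := fun i hi =>
      notMem_support_iff.1 fun h => (Finset.mem_range.1 (hn h)).not_ge hi
    exact (h n).comp (Continuous.prodMk_right (X := SupportedBelow n) ⟨v, hv⟩)
  let F : (ℕ →₀ ℂ) → C(Y, Z) := fun v => ⟨_, hslice v⟩
  have hF : Continuous F := continuous_of_forall_supportedBelow fun n =>
    (ContinuousMap.curry ⟨_, h n⟩).continuous
  exact ContinuousMap.continuous_uncurry_of_continuous ⟨F, hF⟩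

theorem continuous_of_continuous_apply {X : Type*} [TopologicalSpace X] {f : X → ℕ →₀ ℂ} (n : ℕ)
    (hf : ∀ x i, n ≤ i → f x i = 0) (hc : ∀ i, Continuous fun x => f x i) : Continuous f := by
  let g : X → SupportedBelow n := fun x => ⟨f x, hf x⟩
  have hg : Continuous g := continuous_induced_rng.2 (continuous_pi hc)
  exact (SupportedBelow.continuous_val n).comp hg

variable {k : ℕ}

def interleaveLine (j : Fin k) (t : I) (v : ℕ →₀ ℂ) : ℕ →₀ ℂ :=
  (t : ℂ) • v + (1 - t : ℂ) • interleave k j v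

theorem interleaveLine_apply (j : Fin k) (t : I) (v : ℕ →₀ ℂ) (i : ℕ) :
    interleaveLine j t v i = t * v i + (1 - t) * if i % k = j then v (i / k) else 0 := by
  simp [interleaveLine, interleave_apply]

@[simp]
theorem interleaveLine_zero (j : Fin k) (v : ℕ →₀ ℂ) : interleaveLine j 0 v = interleave k j v := by
  simp [interleaveLine]

@[simp]
theorem interleaveLine_one (j : Fin k) (v : ℕ →₀ ℂ) : interleaveLine j 1 v = v := by
  simp [interleaveLine]

theorem interleaveLine_smul (j : Fin k) (t : I) (c : ℂ) (v : ℕ →₀ ℂ) :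
    interleaveLine j t (c • v) = c • interleaveLine j t v := by
  simp only [interleaveLine, map_smul, smul_add, smul_comm c]

theorem linearIndependent_interleaveLine (hk : 2 ≤ k) (t : I) {v : Fin k → ℕ →₀ ℂ}
    (hv : LinearIndependent ℂ v) : LinearIndependent ℂ fun j => interleaveLine j t (v j) := by
  rcases eq_or_ne t 1 with rfl | ht
  · simpa using hv
  · refine linearIndependent_smul_add_smul_interleave hk (add_sub_cancel _ _) ?_ hv.ne_zero
    exact sub_ne_zero.2 fun h => ht (Subtype.ext (by exact_mod_cast h.symm))

theorem interleaveLine_ne_zero (hk : 2 ≤ k) (j : Fin k) (t : I) {v : ℕ →₀ ℂ} (hv : v ≠ 0) :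
    interleaveLine j t v ≠ 0 := by
  rcases eq_or_ne t 1 with rfl | ht
  · simpa using hv
  · refine (linearIndependent_smul_add_smul_interleave hk (add_sub_cancel _ _) ?_
      fun _ : Fin k => hv).ne_zero j
    exact sub_ne_zero.2 fun h => ht (Subtype.ext (by exact_mod_cast h.symm))

theorem continuous_interleaveLine (j : Fin k) :
    Continuous fun p : (ℕ →₀ ℂ) × I => interleaveLine j p.2 p.1 := by
  refine continuous_prod_of_forall_supportedBelow fun n =>
    continuous_of_continuous_apply (k * n + n) ?_ ?_
  · rintro ⟨v, t⟩ i hi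
    have hdiv : n ≤ i / k := (Nat.le_div_iff_mul_le j.pos).2 (by rw [mul_comm]; omega)
    simp [interleaveLine_apply, v.2 i (by omega), v.2 (i / k) hdiv]
  · intro i
    have ht : Continuous fun p : SupportedBelow n × I => ((p.2 : ℝ) : ℂ) := by fun_prop
    have hv (m : ℕ) : Continuous fun p : SupportedBelow n × I => p.1.1 m :=
      (SupportedBelow.continuous_apply n m).comp continuous_fst
    simp only [interleaveLine_apply]
    split_ifs <;> fun_prop

end Finsupp

namespace CPinf

open unitInterval Finsupp

variable {k : ℕ}

def interleaveHomotopy (hk : 2 ≤ k) (j : Fin k) : CPinf → C(I, CPinf) :=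
  Projectivization.lift
    (ContinuousMap.curry
      ⟨fun p : {v : ℕ →₀ ℂ // v ≠ 0} × I =>
        Projectivization.mk ℂ (interleaveLine j p.2 p.1) (interleaveLine_ne_zero hk j p.2 p.1.2),
        continuous_quotient_mk'.comp (Continuous.subtype_mk ((continuous_interleaveLine j).comp
          ((continuous_subtype_val.comp continuous_fst).prodMk continuous_snd)) _)⟩)
    (fun a b c hab => by
      ext t
      refine (Projectivization.mk_eq_mk_iff' ℂ _ _ _ _).2 ⟨c, ?_⟩
      rw [← interleaveLine_smul, hab])

theorem interleaveHomotopy_mk (hk : 2 ≤ k) (j : Fin k) {v : ℕ →₀ ℂ} (hv : v ≠ 0) (t : I) :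
    interleaveHomotopy hk j (Projectivization.mk ℂ v hv) t =
      Projectivization.mk ℂ (interleaveLine j t v) (interleaveLine_ne_zero hk j t hv) :=
  rfl

theorem continuous_interleaveHomotopy (hk : 2 ≤ k) (j : Fin k) :
    Continuous (interleaveHomotopy hk j) :=
  Continuous.quotient_lift (ContinuousMap.continuous _) _

@[simp]
theorem interleaveHomotopy_one (hk : 2 ≤ k) (j : Fin k) (x : CPinf) :
    interleaveHomotopy hk j x 1 = x := by
  induction x using Projectivization.ind with
  | h v hv => simp [interleaveHomotopy_mk]

theorem independent_interleaveHomotopy_of_linearIndependent (hk : 2 ≤ k) (t : I)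
    (p : Fin k → CPinf) (h : LinearIndependent ℂ fun j => interleaveLine j t (p j).rep) :
    Projectivization.Independent fun j => interleaveHomotopy hk j (p j) t := by
  convert Projectivization.Independent.mk _
    (fun j => interleaveLine_ne_zero hk j t (p j).rep_nonzero) h with j
  rw [← interleaveHomotopy_mk hk j (p j).rep_nonzero, Projectivization.mk_rep]

theorem independent_interleaveHomotopy (hk : 2 ≤ k) (t : I) {p : Fin k → CPinf}
    (hp : Projectivization.Independent p) :
    Projectivization.Independent fun j => interleaveHomotopy hk j (p j) t :=
  independent_interleaveHomotopy_of_linearIndependent hk t p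
    (linearIndependent_interleaveLine hk t (Projectivization.independent_iff.1 hp))

theorem independent_interleaveHomotopy_zero (hk : 2 ≤ k) (p : Fin k → CPinf) :
    Projectivization.Independent fun j => interleaveHomotopy hk j (p j) 0 :=
  independent_interleaveHomotopy_of_linearIndependent hk 0 p (by
    simpa using linearIndependent_interleave hk fun j => (p j).rep_nonzero)

def interleaveDeformation (hk : 2 ≤ k) : C(I × (Fin k → CPinf), Fin k → CPinf) :=
  ⟨fun q j => interleaveHomotopy hk j (q.2 j) q.1, continuous_pi fun j =>
    ContinuousEval.continuous_eval.comp
      (((continuous_interleaveHomotopy hk j).comp ((continuous_apply j).comp continuous_snd)).prodMk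
        continuous_fst)⟩

def homotopyEquivIndependent (hk : 2 ≤ k) :
    ContinuousMap.HomotopyEquiv {p : Fin k → CPinf | Projectivization.Independent p}
      (Fin k → CPinf) :=
  .ofDeformationInto (interleaveDeformation hk) (independent_interleaveHomotopy_zero hk)
    (fun p => funext fun j => interleaveHomotopy_one hk j (p j))
    (fun t _ => independent_interleaveHomotopy hk t)

end CPinf

end

/-- The inclusion of the space `F_nc(ℂP^∞, 3)` of ordered triples of
non-collinear points of `ℂP^∞` (triples whose representative vectors are linearly
independent) into `(ℂP^∞)³` is a homotopy equivalence. -/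
theorem inclusion_noncollinear_homotopyEquiv :
    ∃ h : ContinuousMap.HomotopyEquiv
        {p : Fin 3 → CPinf // Projectivization.Independent p} (Fin 3 → CPinf),
      ∀ p : {p : Fin 3 → CPinf // Projectivization.Independent p}, h.toFun p = p.val :=
  ⟨CPinf.homotopyEquivIndependent (by norm_num), fun _ => rfl⟩
end

section
/- For all natural numbers m and k with m + 1 ≤ k and 2k ≤ 3m, one has, as integers, P₃,≤m(k) = ⌊(k+3)²/12⌉ − ⌊(k−m−1)²/4⌉ + m − k. -/
/-!
Let `p₃(k)` count the triples `a ≥ b ≥ c ≥ 0` with sum `k`. Subtracting `1` from every part of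
the triples with `c > 0` and dropping `c` from the others gives
`p₃(k + 3) = p₃(k) + ⌊(k + 3)/2⌋ + 1`, so `p₃` increases by exactly `k + 6` from `k` to `k + 6`,
as does `(k + 3)²/12`; checking `k < 6` yields `p₃(k) = ⌊(k + 3)²/12⌉`.
The triples with `a > m` correspond, via `(a, b, c) ↦ (b, c)`, to the pairs `b ≥ c ≥ 0` with
`b + c ≤ n := k - m - 1` (for `b ≤ a` to be automatic one needs `k ≤ 2m + 2`), and the same
argument with period `2` counts these as `⌊(n + 2)²/4⌉ = ⌊n²/4⌉ + n + 1`.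
-/

/-- `P₃,≤m k` is the number of partitions of `k` into three non-negative parts,
each at most `m`. -/
noncomputable def P3le (m k : ℕ) : ℕ :=
  {p : ℕ × ℕ × ℕ | p.1 ≤ m ∧ p.2.2 ≤ p.2.1 ∧ p.2.1 ≤ p.1 ∧ p.1 + p.2.1 + p.2.2 = k}.ncard

open Finset

section Round

variable {α : Type*} [Field α] [LinearOrder α] [IsStrictOrderedRing α] [FloorRing α]

theorem eq_round_of_same_increments {f : ℕ → ℤ} {g : ℕ → α} {d : ℕ} (hd : 0 < d)
    (hbase : ∀ k < d, f k = round (g k))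
    (hstep : ∀ k, g (k + d) = g k + (f (k + d) - f k : ℤ)) (k : ℕ) :
    f k = round (g k) := by
  induction k using Nat.strong_induction_on with
  | _ k ih =>
    by_cases hk : k < d
    · exact hbase k hk
    · obtain ⟨j, rfl⟩ : ∃ j, k = j + d := ⟨k - d, by omega⟩
      rw [hstep, round_add_intCast, ← ih j (by omega)]
      ring

theorem round_add_two_sq_div_four (n : ℤ) :
    round (((n : α) + 2) ^ 2 / 4) = round ((n : α) ^ 2 / 4) + n + 1 := by
  rw [add_assoc, ← round_add_intCast]
  congr 1
  push_cast
  ring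

end Round

def descPairs (n : ℕ) : Finset (ℕ × ℕ) :=
  (antidiagonal n).filter fun p => p.2 ≤ p.1

def descTriples (k : ℕ) : Finset (ℕ × ℕ × ℕ) :=
  (range (k + 1) ×ˢ range (k + 1) ×ˢ range (k + 1)).filter
    fun p => p.2.2 ≤ p.2.1 ∧ p.2.1 ≤ p.1 ∧ p.1 + p.2.1 + p.2.2 = k

def descPairsSumLE (n : ℕ) : Finset (ℕ × ℕ) :=
  (range (n + 1) ×ˢ range (n + 1)).filter fun p => p.2 ≤ p.1 ∧ p.1 + p.2 ≤ n

@[simp]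
theorem mem_descPairs {n : ℕ} {p : ℕ × ℕ} : p ∈ descPairs n ↔ p.2 ≤ p.1 ∧ p.1 + p.2 = n := by
  rw [descPairs, mem_filter, HasAntidiagonal.mem_antidiagonal, and_comm]

@[simp]
theorem mem_descTriples {k : ℕ} {p : ℕ × ℕ × ℕ} :
    p ∈ descTriples k ↔ p.2.2 ≤ p.2.1 ∧ p.2.1 ≤ p.1 ∧ p.1 + p.2.1 + p.2.2 = k := by
  simp only [descTriples, mem_filter, mem_product, mem_range]
  omega

@[simp]
theorem mem_descPairsSumLE {n : ℕ} {p : ℕ × ℕ} :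
    p ∈ descPairsSumLE n ↔ p.2 ≤ p.1 ∧ p.1 + p.2 ≤ n := by
  simp only [descPairsSumLE, mem_filter, mem_product, mem_range]
  omega

theorem card_descPairs (n : ℕ) : #(descPairs n) = n / 2 + 1 := by
  rw [← card_range (n / 2 + 1)]
  refine card_nbij' Prod.snd (fun i => (n - i, i)) ?_ ?_ ?_ ?_ <;>
    intro p hp <;>
    simp only [coe_range, mem_coe, mem_descPairs, Set.mem_Iio, Prod.ext_iff, and_true] at hp ⊢ <;>
    omega

theorem card_descTriples_add_three (k : ℕ) :
    #(descTriples (k + 3)) = #(descTriples k) + #(descPairs (k + 3)) := by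
  rw [← card_filter_add_card_filter_not (s := descTriples (k + 3)) (fun p => p.2.2 ≠ 0),
    add_comm, add_comm (#(descTriples k))]
  congr 1
  · refine card_nbij' (fun p => (p.1, p.2.1)) (fun q => (q.1, q.2, 0)) ?_ ?_ ?_ ?_ <;>
      intro p hp <;> simp only [mem_coe, mem_filter, mem_descTriples, mem_descPairs,
        Prod.ext_iff, true_and] at hp ⊢ <;> omega
  · refine card_nbij' (fun p => (p.1 - 1, p.2.1 - 1, p.2.2 - 1))
      (fun q => (q.1 + 1, q.2.1 + 1, q.2.2 + 1)) ?_ ?_ ?_ ?_ <;>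
      intro p hp <;> simp only [mem_coe, mem_filter, mem_descTriples,
        Prod.ext_iff] at hp ⊢ <;> omega

theorem card_descPairsSumLE_succ (n : ℕ) :
    #(descPairsSumLE (n + 1)) = #(descPairsSumLE n) + #(descPairs (n + 1)) := by
  rw [← card_union_of_disjoint]
  · congr 1
    ext p
    simp only [mem_union, mem_descPairsSumLE, mem_descPairs]
    omega
  · rw [disjoint_left]
    intro p
    simp only [mem_descPairsSumLE, mem_descPairs]
    omega

theorem card_descTriples (k : ℕ) : (#(descTriples k) : ℤ) = round (((k : ℚ) + 3) ^ 2 / 12) := by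
  refine eq_round_of_same_increments (f := fun k => #(descTriples k))
    (g := fun k : ℕ => ((k : ℚ) + 3) ^ 2 / 12) (d := 6) (by norm_num) ?_ (fun k => ?_) k
  · intro k hk
    interval_cases k <;> norm_num [round_eq] <;> decide
  · have h₁ := card_descTriples_add_three k
    have h₂ : #(descTriples (k + 6)) = _ := card_descTriples_add_three (k + 3)
    simp only [card_descPairs] at h₁ h₂
    have hincr : (#(descTriples (k + 6)) : ℤ) - #(descTriples k) = k + 6 := by omega
    rw [hincr]
    push_cast
    ring

theorem card_descPairsSumLE (n : ℕ) :
    (#(descPairsSumLE n) : ℤ) = round (((n : ℚ) + 2) ^ 2 / 4) := by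
  refine eq_round_of_same_increments (f := fun n => #(descPairsSumLE n))
    (g := fun n : ℕ => ((n : ℚ) + 2) ^ 2 / 4) (d := 2) (by norm_num) ?_ (fun n => ?_) n
  · intro n hn
    interval_cases n <;> norm_num [round_eq] <;> decide
  · have h₁ := card_descPairsSumLE_succ n
    have h₂ : #(descPairsSumLE (n + 2)) = _ := card_descPairsSumLE_succ (n + 1)
    simp only [card_descPairs] at h₁ h₂
    have hincr : (#(descPairsSumLE (n + 2)) : ℤ) - #(descPairsSumLE n) = n + 3 := by omega
    rw [hincr]
    push_cast
    ring

theorem card_filter_not_le_descTriples {m k : ℕ} (h₁ : m + 1 ≤ k) (h₂ : k ≤ 2 * m + 2) :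
    #((descTriples k).filter fun p => ¬p.1 ≤ m) = #(descPairsSumLE (k - (m + 1))) := by
  refine card_nbij' (fun p => p.2) (fun q => (k - q.1 - q.2, q)) ?_ ?_ ?_ ?_ <;>
    intro p hp <;> simp only [mem_coe, mem_filter, mem_descTriples, mem_descPairsSumLE,
      Prod.ext_iff, and_true] at hp ⊢ <;> omega

theorem P3le_eq_card_filter (m k : ℕ) :
    P3le m k = #((descTriples k).filter fun p => p.1 ≤ m) := by
  rw [P3le, ← Set.ncard_coe_finset, coe_filter]
  congr 1
  ext p
  simp only [Set.mem_ofPred_eq, mem_descTriples]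
  tauto

/-- For `m + 1 ≤ k ≤ ⌊3m/2⌋`,
`P₃,≤m(k) = ⌊(k+3)²/12⌉ − ⌊(k−m−1)²/4⌉ + m − k` (as integers). -/
theorem P3le_formula (m k : ℕ) (h1 : m + 1 ≤ k) (h2 : 2 * k ≤ 3 * m) :
    (P3le m k : ℤ) =
      round ((((k : ℚ) + 3) ^ 2) / 12) - round ((((k : ℚ) - m - 1) ^ 2) / 4)
        + (m : ℤ) - (k : ℤ) := by
  have hsplit := card_filter_add_card_filter_not (s := descTriples k) fun p => p.1 ≤ m
  rw [card_filter_not_le_descTriples h1 (by omega)] at hsplit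
  have hround := round_add_two_sq_div_four (α := ℚ) (k - (m + 1) : ℕ)
  rw [Int.cast_natCast, ← card_descPairsSumLE] at hround
  have hnℚ : (k : ℚ) - m - 1 = (k - (m + 1) : ℕ) := by
    push_cast [Nat.cast_sub h1]
    ring
  have hnℤ : ((k - (m + 1) : ℕ) : ℤ) = k - m - 1 := by omega
  rw [P3le_eq_card_filter, ← card_descTriples, hnℚ]
  omega
end

section
/- For every natural number m ≥ 2, define the integer sequence (b_k)_{0≤k≤3m−1} by b_k = P₃,≤m(k) if 0 ≤ k ≤ m−1, b_k = P₃,≤m(k) + m − k − 1 if m ≤ k ≤ 2m−1, and b_k = P₃,≤m(k) − 3m + k if 2m ≤ k ≤ 3m−1 (all computed in ℤ). Then every b_k is nonnegative, and the sequence (b_k) is unimodal: there is an index i such that b_k ≤ b_{k+1} for all k < i and b_k ≥ b_{k+1} for all i ≤ k < 3m−1. -/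
/-- The finset of partitions of `k` into at most three parts, each at most `m`. -/
def T3 (m k : ℕ) : Finset (ℕ × ℕ × ℕ) :=
  ((Finset.range (m+1)) ×ˢ (Finset.range (m+1)) ×ˢ (Finset.range (m+1))).filter
    (fun p => p.2.2 ≤ p.2.1 ∧ p.2.1 ≤ p.1 ∧ p.1 + p.2.1 + p.2.2 = k)

lemma mem_T3 (m k : ℕ) (p : ℕ × ℕ × ℕ) :
    p ∈ T3 m k ↔ p.1 ≤ m ∧ p.2.2 ≤ p.2.1 ∧ p.2.1 ≤ p.1 ∧ p.1 + p.2.1 + p.2.2 = k := by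
  simp only [T3, Finset.mem_filter, Finset.mem_product, Finset.mem_range]
  omega

lemma P3le_eq (m k : ℕ) : P3le m k = (T3 m k).card := by
  rw [P3le, ← Set.ncard_coe_finset]
  congr 1
  ext p
  simp only [Finset.mem_coe, mem_T3, Set.mem_setOf_eq]

lemma key3 (m k : ℕ) :
    (T3 m (k+1)).card + ((T3 m k).filter (fun p => p.1 = m)).card
      = (T3 m k).card + ((T3 m (k+1)).filter (fun p => p.2.1 = p.1)).card := by
  have h1 := Finset.card_filter_add_card_filter_not
    (s := T3 m k) (p := fun p => p.1 = m)
  have h2 := Finset.card_filter_add_card_filter_not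
    (s := T3 m (k+1)) (p := fun p => p.2.1 = p.1)
  have h3 : ((T3 m k).filter (fun p => ¬ p.1 = m)).card
      = ((T3 m (k+1)).filter (fun p => ¬ p.2.1 = p.1)).card := by
    apply Finset.card_bij (fun p _ => (p.1 + 1, p.2.1, p.2.2))
    · rintro ⟨a, b, c⟩ hp
      simp only [Finset.mem_filter, mem_T3, and_true, true_and] at hp ⊢
      omega
    · rintro ⟨a, b, c⟩ _ ⟨a', b', c'⟩ _ h
      simp only [Prod.mk.injEq] at h ⊢
      omega
    · rintro ⟨a, b, c⟩ hq
      simp only [Finset.mem_filter, mem_T3, and_true, true_and] at hq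
      refine ⟨(a - 1, b, c), ?_, ?_⟩
      · simp only [Finset.mem_filter, mem_T3, and_true, true_and]
        omega
      · simp only [Prod.mk.injEq, and_true, true_and]
        omega
  omega

lemma cardA3 (m k : ℕ) (hk : m ≤ k) :
    ((T3 m k).filter (fun p => p.1 = m)).card
      = (k - m) - ((k - m) - m) + 1 - (k - m + 1)/2 := by
  rw [← Nat.card_Ico ((k - m + 1)/2) ((k - m) - ((k - m) - m) + 1)]
  apply Finset.card_bij (fun p _ => p.2.1)
  · rintro ⟨a, b, c⟩ hp
    simp only [Finset.mem_filter, mem_T3, and_true, true_and] at hp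
    simp only [Finset.mem_Ico]
    omega
  · rintro ⟨a, b, c⟩ hp ⟨a', b', c'⟩ hq h
    simp only [Finset.mem_filter, mem_T3, and_true, true_and] at hp hq
    dsimp only at h
    simp only [Prod.mk.injEq]
    omega
  · intro x hx
    simp only [Finset.mem_Ico] at hx
    refine ⟨(m, x, k - m - x), ?_, rfl⟩
    simp only [Finset.mem_filter, mem_T3, and_true, true_and]
    omega

lemma cardA3_zero (m k : ℕ) (hk : k < m) :
    ((T3 m k).filter (fun p => p.1 = m)).card = 0 := by
  rw [Finset.card_eq_zero]
  ext ⟨a, b, c⟩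
  simp only [Finset.mem_filter, mem_T3, Finset.notMem_empty, iff_false]
  omega

lemma cardB3 (m s : ℕ) :
    ((T3 m s).filter (fun p => p.2.1 = p.1)).card
      = (s/2) - ((s/2) - m) + 1 - (s + 2)/3 := by
  rw [← Nat.card_Ico ((s + 2)/3) ((s/2) - ((s/2) - m) + 1)]
  apply Finset.card_bij (fun p _ => p.1)
  · rintro ⟨a, b, c⟩ hp
    simp only [Finset.mem_filter, mem_T3, and_true, true_and] at hp
    simp only [Finset.mem_Ico]
    omega
  · rintro ⟨a, b, c⟩ hp ⟨a', b', c'⟩ hq h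
    simp only [Finset.mem_filter, mem_T3, and_true, true_and] at hp hq
    dsimp only at h
    simp only [Prod.mk.injEq]
    omega
  · intro x hx
    simp only [Finset.mem_Ico] at hx
    refine ⟨(x, x, s - 2*x), ?_, rfl⟩
    simp only [Finset.mem_filter, mem_T3, and_true, true_and]
    omega

/-- For `m ≥ 2`, the sequence of even Betti numbers of
`C(ℂPᵐ, 3)`, given by `b k = P₃,≤m(k)` for `k ≤ m−1`, `b k = P₃,≤m(k) + m − k − 1`
for `m ≤ k ≤ 2m−1` and `b k = P₃,≤m(k) − 3m + k` for `2m ≤ k ≤ 3m−1`, is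
nonnegative and unimodal. -/
theorem even_betti_C_unimodal (m : ℕ) (hm : 2 ≤ m) (b : ℕ → ℤ)
    (hb : ∀ k : ℕ, b k =
      if k < m then (P3le m k : ℤ)
      else if k < 2 * m then (P3le m k : ℤ) + m - k - 1
      else (P3le m k : ℤ) - 3 * m + k) :
    (∀ k : ℕ, k ≤ 3 * m - 1 → 0 ≤ b k) ∧
    (∃ i : ℕ, (∀ k : ℕ, k < i → b k ≤ b (k + 1)) ∧
      (∀ k : ℕ, i ≤ k → k + 1 ≤ 3 * m - 1 → b (k + 1) ≤ b k)) := by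
  set i : ℕ := (3 * m - 5) / 2 with hi
  have inc : ∀ k : ℕ, k < i → b k ≤ b (k + 1) := by
    intro k hk
    have hkey := key3 m k
    have hB := cardB3 m (k + 1)
    rw [hb k, hb (k + 1), P3le_eq m k, P3le_eq m (k + 1)]
    rcases Nat.lt_or_ge k m with h | h
    · have hA := cardA3_zero m k h
      split_ifs at hB ⊢ <;> push_cast <;> omega
    · have hA := cardA3 m k h
      split_ifs at hA hB ⊢ <;> push_cast <;> omega
  have dec : ∀ k : ℕ, i ≤ k → k + 1 ≤ 3 * m - 1 → b (k + 1) ≤ b k := by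
    intro k hk hk'
    have hkey := key3 m k
    have hB := cardB3 m (k + 1)
    rw [hb k, hb (k + 1), P3le_eq m k, P3le_eq m (k + 1)]
    rcases Nat.lt_or_ge k m with h | h
    · have hA := cardA3_zero m k h
      split_ifs at hB ⊢ <;> push_cast <;> omega
    · have hA := cardA3 m k h
      split_ifs at hA hB ⊢ <;> push_cast <;> omega
  have hlast : 0 ≤ b (3 * m - 1) := by
    have hpos : 0 < (T3 m (3 * m - 1)).card := by
      apply Finset.card_pos.mpr
      exact ⟨(m, m, m - 1), by simp only [mem_T3]; omega⟩
    rw [hb (3 * m - 1), P3le_eq m (3 * m - 1)]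
    split_ifs <;> push_cast <;> omega
  have low : ∀ k : ℕ, k ≤ i → 0 ≤ b k := by
    intro k
    induction k with
    | zero =>
      intro _
      rw [hb 0]
      split_ifs <;> push_cast <;> omega
    | succ n ih =>
      intro hn
      have h1 := ih (by omega)
      have h2 := inc n (by omega)
      omega
  have high : ∀ d k : ℕ, k + d = 3 * m - 1 → i ≤ k → 0 ≤ b k := by
    intro d
    induction d with
    | zero =>
      intro k hk _
      have : k = 3 * m - 1 := by omega
      rw [this]
      exact hlast
    | succ n ih =>
      intro k hk hik
      have h1 := dec k hik (by omega)
      have h2 := ih (k + 1) (by omega) (by omega)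
      omega
  refine ⟨?_, i, inc, dec⟩
  intro k hk
  rcases le_or_gt k i with h | h
  · exact low k h
  · exact high (3 * m - 1 - k) k (by omega) (by omega)
end
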